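/- Under the duality pairing ⟨x^c, λ^d⟩_D = δ_{c,d}·c! (where c! = c_1!···c_n!), the integration operator T_i^∨ defined by (T_i^∨ f)(λ) = ∫_{λ_{i+1}}^{λ_i} f(λ_1,...,λ_{i-1},z,λ_{i+2},...) dz is adjoint to the trimming operator T_i: ⟨T_i g, f⟩_D = ⟨g, T_i^∨ f⟩_D for all polynomials g ∈ ℚ[x_1,x_2,...] and f ∈ ℚ[λ_1,λ_2,...]. -/

import Mathlib

open MvPolynomial

/-- The Bergeron–Sottile map over `ℚ` (1-based `i`): set `x_i = 0` and shift
later variables down by one (`X j` is `x_{j+1}`). -/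
noncomputable def R (i : ℕ) : MvPolynomial ℕ ℚ →ₐ[ℚ] MvPolynomial ℕ ℚ :=
  aeval (fun j => if j + 1 < i then X j else if j + 1 = i then 0 else X (j - 1))

/-- The trimming operator `T i = (R (i+1) g - R i g) / x_i`. -/
noncomputable def T (i : ℕ) (g : MvPolynomial ℕ ℚ) : MvPolynomial ℕ ℚ :=
  (R (i + 1) g - R i g).divMonomial (Finsupp.single (i - 1) 1)

/-- The `D`-pairing `⟨g, f⟩_D = (g(d/dλ_1, d/dλ_2, …) f)(0)`; on monomials,
`⟨x^c, λ^d⟩_D = δ_{c,d} · c!`. -/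
noncomputable def Dpair (g f : MvPolynomial ℕ ℚ) : ℚ :=
  ∑ d ∈ g.support, coeff d g * coeff d f * (d.prod fun _ e => (Nat.factorial e : ℚ))

/-- The integration operator
`(T_i^∨ f)(λ) = ∫_{λ_{i+1}}^{λ_i} f(λ_1,…,λ_{i-1}, z, λ_{i+2},…) dz`
(1-based `i`; `λ_{j+1}` is the variable `X j`).  On a monomial with `z`-slot
exponent `e` the integral contributes `(λ_i^{e+1} - λ_{i+1}^{e+1})/(e+1)`. -/
noncomputable def Tvee (i : ℕ) (f : MvPolynomial ℕ ℚ) : MvPolynomial ℕ ℚ :=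
  ∑ d ∈ f.support,
    C (coeff d f / ((d (i - 1) : ℚ) + 1)) *
      (X (i - 1) ^ (d (i - 1) + 1) - X i ^ (d (i - 1) + 1)) *
      ∏ j ∈ d.support.erase (i - 1), (if j < i - 1 then X j else X (j + 1)) ^ d j

/-! ### Auxiliary machinery -/


/-
`T_i` is `R_{i+1} - R_i` followed by division by `x_i`, so its adjoint is the composite of the
adjoints in reverse order. With `k = i - 1`, `R_{k+1}` is `killCompl (succAbove k)`, whose adjoint
is `rename (succAbove k)`: renaming along an injection moves coefficients without changing the
factorial weights. The adjoint of division by `x_k` is termwise integration in `λ_k`, because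
`(d + e_k)! = (d_k + 1) · d!`. Finally `T_i^∨ f` is the difference of the two renamings of that
antiderivative, which is the fundamental theorem of calculus in `z`.
-/

open Finsupp

def multiFactorial {σ : Type*} (d : σ →₀ ℕ) : ℚ :=
  d.prod fun _ e => (e.factorial : ℚ)

lemma multiFactorial_mapDomain {σ τ : Type*} {φ : σ → τ} (hφ : Function.Injective φ)
    (d : σ →₀ ℕ) :
    multiFactorial (mapDomain φ d) = multiFactorial d :=
  prod_mapDomain_index_inj hφ

lemma multiFactorial_single_one_add {σ : Type*} [DecidableEq σ] (k : σ) (d : σ →₀ ℕ) :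
    multiFactorial (single k 1 + d) = (d k + 1) * multiFactorial d := by
  have hfac : ∀ _ : σ, ((Nat.factorial 0 : ℕ) : ℚ) = 1 := fun _ => by simp
  rw [multiFactorial, multiFactorial, ← mul_prod_erase' _ k _ hfac, ← mul_prod_erase' d k _ hfac,
    erase_add, erase_single, zero_add, Finsupp.add_apply, single_eq_same, add_comm 1,
    Nat.factorial_succ]
  push_cast
  ring

lemma Dpair_eq_sum (g f : MvPolynomial ℕ ℚ) :
    Dpair g f = ∑ d ∈ g.support, coeff d g * coeff d f * multiFactorial d :=
  rfl

lemma Dpair_eq_sum_support_right (g f : MvPolynomial ℕ ℚ) :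
    Dpair g f = ∑ d ∈ f.support, coeff d g * coeff d f * multiFactorial d := by
  classical
  have hg : ∀ d ∈ g.support ∪ f.support, d ∉ g.support →
      coeff d g * coeff d f * multiFactorial d = 0 := fun d _ hd => by
    rw [MvPolynomial.notMem_support_iff.mp hd, zero_mul, zero_mul]
  have hf : ∀ d ∈ g.support ∪ f.support, d ∉ f.support →
      coeff d g * coeff d f * multiFactorial d = 0 := fun d _ hd => by
    rw [MvPolynomial.notMem_support_iff.mp hd, mul_zero, zero_mul]
  rw [Dpair_eq_sum, Finset.sum_subset Finset.subset_union_left hg,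
    Finset.sum_subset Finset.subset_union_right hf]

lemma Dpair_add_right (g f₁ f₂ : MvPolynomial ℕ ℚ) :
    Dpair g (f₁ + f₂) = Dpair g f₁ + Dpair g f₂ := by
  simp only [Dpair, coeff_add, ← Finset.sum_add_distrib, mul_add, add_mul]

lemma Dpair_sub_right (g f₁ f₂ : MvPolynomial ℕ ℚ) :
    Dpair g (f₁ - f₂) = Dpair g f₁ - Dpair g f₂ := by
  simp only [Dpair, coeff_sub, ← Finset.sum_sub_distrib, mul_sub, sub_mul]

lemma Dpair_sub_left (g₁ g₂ f : MvPolynomial ℕ ℚ) :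
    Dpair (g₁ - g₂) f = Dpair g₁ f - Dpair g₂ f := by
  simp only [Dpair_eq_sum_support_right, coeff_sub, ← Finset.sum_sub_distrib, sub_mul]

lemma Dpair_monomial_right (g : MvPolynomial ℕ ℚ) (d : ℕ →₀ ℕ) (b : ℚ) :
    Dpair g (monomial d b) = coeff d g * b * multiFactorial d := by
  classical
  rw [Dpair_eq_sum, Finset.sum_eq_single d]
  · rw [coeff_monomial, if_pos rfl]
  · intro d' _ hne
    rw [coeff_monomial, if_neg (Ne.symm hne), mul_zero, zero_mul]
  · intro hd
    rw [MvPolynomial.notMem_support_iff.mp hd, zero_mul, zero_mul]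

theorem Dpair_killCompl {φ : ℕ → ℕ} (hφ : Function.Injective φ) (g f : MvPolynomial ℕ ℚ) :
    Dpair (killCompl hφ g) f = Dpair g (rename φ f) := by
  classical
  rw [Dpair_eq_sum_support_right, Dpair_eq_sum_support_right, support_rename_of_injective hφ,
    Finset.sum_image fun _ _ _ _ h => mapDomain_injective hφ h]
  refine Finset.sum_congr rfl fun d _ => ?_
  rw [coeff_killCompl, coeff_rename_mapDomain _ hφ, multiFactorial_mapDomain hφ]

def succAbove (k j : ℕ) : ℕ := if j < k then j else j + 1

lemma succAbove_injective (k : ℕ) : Function.Injective (succAbove k) := by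
  intro a b h
  unfold succAbove at h
  split_ifs at h <;> omega

lemma succAbove_succ_of_ne {k j : ℕ} (h : j ≠ k) : succAbove (k + 1) j = succAbove k j := by
  unfold succAbove
  split_ifs <;> omega

lemma killCompl_X_of_notMem_range {σ τ R : Type*} [CommSemiring R] {φ : σ → τ}
    (hφ : Function.Injective φ) {j : τ} (hj : j ∉ Set.range φ) :
    killCompl (R := R) hφ (X j) = 0 := by
  simp [killCompl, hj]

theorem R_succ_eq_killCompl (k : ℕ) : _root_.R (k + 1) = killCompl (succAbove_injective k) := by
  refine algHom_ext fun j => ?_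
  have killCompl_X_succAbove : ∀ m, succAbove k m = j →
      killCompl (succAbove_injective k) (X j : MvPolynomial ℕ ℚ) = X m := by
    rintro m rfl
    rw [← rename_X, killCompl_rename_app]
  rw [_root_.R, aeval_X]
  rcases lt_trichotomy j k with hj | rfl | hj
  · rw [if_pos (by omega), killCompl_X_succAbove j (if_pos hj)]
  · rw [if_neg (by omega), if_pos rfl, killCompl_X_of_notMem_range]
    rintro ⟨m, hm⟩
    unfold succAbove at hm
    split_ifs at hm <;> omega
  · rw [if_neg (by omega), if_neg (by omega), killCompl_X_succAbove (j - 1)]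
    rw [succAbove, if_neg (by omega), Nat.sub_add_cancel (by omega)]

noncomputable def integrate (k : ℕ) : MvPolynomial ℕ ℚ →ₗ[ℚ] MvPolynomial ℕ ℚ :=
  (basisMonomials ℕ ℚ).constr ℚ fun d => monomial (single k 1 + d) ((d k : ℚ) + 1)⁻¹

lemma integrate_monomial (k : ℕ) (d : ℕ →₀ ℕ) (b : ℚ) :
    integrate k (monomial d b) = monomial (single k 1 + d) (b / (d k + 1)) := by
  have hbasis : monomial d b = b • basisMonomials ℕ ℚ d := by
    rw [coe_basisMonomials, smul_monomial, smul_eq_mul, mul_one]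
  rw [hbasis, map_smul, integrate, Module.Basis.constr_basis, smul_monomial, smul_eq_mul,
    div_eq_mul_inv]

theorem Dpair_divMonomial_single (k : ℕ) (g f : MvPolynomial ℕ ℚ) :
    Dpair (g.divMonomial (single k 1)) f = Dpair g (integrate k f) := by
  induction f using MvPolynomial.induction_on' with
  | monomial d b =>
    rw [integrate_monomial, Dpair_monomial_right, Dpair_monomial_right, coeff_divMonomial,
      multiFactorial_single_one_add]
    field_simp
  | add f₁ f₂ h₁ h₂ => rw [map_add, Dpair_add_right, Dpair_add_right, h₁, h₂]

lemma monomial_single_one_add {σ R : Type*} [CommSemiring R] [DecidableEq σ] (k : σ)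
    (d : σ →₀ ℕ) (c : R) :
    monomial (single k 1 + d) c =
      C c * X k ^ (d k + 1) * ∏ j ∈ d.support.erase k, X j ^ d j := by
  have herase : ((d.erase k).prod fun j e => (X j : MvPolynomial σ R) ^ e) =
      ∏ j ∈ d.support.erase k, X j ^ d j := by
    rw [Finsupp.prod, support_erase]
    exact Finset.prod_congr rfl fun j hj => by rw [erase_ne (Finset.ne_of_mem_erase hj)]
  rw [monomial_eq, ← mul_prod_erase' _ k _ fun _ => pow_zero _, erase_add, erase_single,
    zero_add, herase, Finsupp.add_apply, single_eq_same, add_comm 1, mul_assoc]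

lemma rename_monomial_single_one_add {φ : ℕ → ℕ} {k : ℕ} (hφ : ∀ j ≠ k, φ j = succAbove k j)
    (d : ℕ →₀ ℕ) (c : ℚ) :
    rename φ (monomial (single k 1 + d) c) =
      C c * X (φ k) ^ (d k + 1) *
        ∏ j ∈ d.support.erase k, (if j < k then X j else X (j + 1)) ^ d j := by
  rw [monomial_single_one_add, map_mul, map_mul, rename_C, map_pow, rename_X, map_prod]
  refine congrArg _ (Finset.prod_congr rfl fun j hj => ?_)
  rw [map_pow, rename_X, hφ j (Finset.ne_of_mem_erase hj), succAbove, apply_ite X]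

theorem Tvee_succ_eq (k : ℕ) (f : MvPolynomial ℕ ℚ) :
    Tvee (k + 1) f =
      rename (succAbove (k + 1)) (integrate k f) - rename (succAbove k) (integrate k f) := by
  conv_rhs => rw [f.as_sum]
  simp only [map_sum, integrate_monomial, ← Finset.sum_sub_distrib]
  rw [Tvee, Nat.add_sub_cancel]
  refine Finset.sum_congr rfl fun d _ => ?_
  rw [rename_monomial_single_one_add fun _ => succAbove_succ_of_ne,
    rename_monomial_single_one_add fun _ _ => rfl]
  simp only [succAbove, lt_add_one, lt_irrefl, if_true, if_false]
  ring

/-- The integration operator `T_i^∨` is adjoint to the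
trimming operator `T_i` under the `D`-pairing:
`⟨T_i g, f⟩_D = ⟨g, T_i^∨ f⟩_D`. -/
theorem trimming_adjoint (i : ℕ) (hi : 1 ≤ i) (g f : MvPolynomial ℕ ℚ) :
    Dpair (T i g) f = Dpair g (Tvee i f) := by
  obtain ⟨k, rfl⟩ : ∃ k, i = k + 1 := ⟨i - 1, by omega⟩
  calc Dpair (T (k + 1) g) f
      = Dpair (_root_.R (k + 2) g - _root_.R (k + 1) g) (integrate k f) := by
        rw [T, Nat.add_sub_cancel, Dpair_divMonomial_single]
    _ = Dpair g (rename (succAbove (k + 1)) (integrate k f)) -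
          Dpair g (rename (succAbove k) (integrate k f)) := by
        rw [Dpair_sub_left, R_succ_eq_killCompl, R_succ_eq_killCompl, Dpair_killCompl,
          Dpair_killCompl]
    _ = Dpair g (Tvee (k + 1) f) := by rw [← Dpair_sub_right, Tvee_succ_eq]
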